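/- arXiv:2104.00057 — 2 statements merged into one kernel-verified Lean document; each statement's English description precedes it below -/
import Mathlib

section
/- Let λ, R > 0, n ≥ 2, and 0 ≤ t ≤ R²/(2(n-1)). If a_t > 0 satisfies tan(λ(√(a_t² + 2(n-1)t) - R)) · a_t = √(a_t² + 2(n-1)t), then a_t² ≥ (π/(4λ) + R)² - 2(n-1)t ≥ πR/(2λ). -/
/-! The angle `θ = λ(s - R)`, where `s = √(a² + 2(n-1)t) ≥ a`, lies in `(0, π/2)` and has
`tan θ = s / a ≥ 1`, so `θ ≥ π/4` by monotonicity of `tan`, i.e. `s ≥ R + π/(4λ)`; squaring gives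
the bound on `a²`. The lower bound `πR/(2λ)` is the cross term of `(π/(4λ) + R)²`, left over
because `2(n-1)t ≤ R²`. -/

open Real Set

lemma Real.pi_div_four_le_of_one_le_tan {x : ℝ} (hx : x ∈ Ioo (-(π / 2)) (π / 2))
    (h : 1 ≤ tan x) : π / 4 ≤ x := by
  have hpi := pi_pos
  rw [← tan_pi_div_four] at h
  exact (strictMonoOn_tan.le_iff_le ⟨by linarith, by linarith⟩ hx).mp h

lemma add_pi_div_four_le_of_tan_mul_eq {lam R a s : ℝ} (hlam : 0 < lam) (ha : 0 < a)
    (has : a ≤ s) (hs : s ∈ Ioo R (R + π / (2 * lam))) (heq : tan (lam * (s - R)) * a = s) :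
    R + π / (4 * lam) ≤ s := by
  obtain ⟨hRs, hsR⟩ := hs
  have hθ : lam * (s - R) ∈ Ioo (-(π / 2)) (π / 2) := by
    constructor
    · nlinarith [pi_pos]
    · calc lam * (s - R) < lam * (π / (2 * lam)) := by gcongr; linarith
        _ = π / 2 := by field_simp
  have htan : 1 ≤ tan (lam * (s - R)) :=
    le_of_mul_le_mul_right (by rwa [one_mul, heq]) ha
  have hθ4 : π / 4 / lam ≤ s - R :=
    (div_le_iff₀' hlam).mpr (Real.pi_div_four_le_of_one_le_tan hθ htan)
  rw [div_div] at hθ4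
  linarith

/-- If `a_t > 0` solves `tan(λ(√(a_t² + 2(n-1)t) - R)) · a_t = √(a_t² + 2(n-1)t)`
(with `√(a_t² + 2(n-1)t) ∈ (R, R + π/(2λ))` and `0 ≤ t ≤ R²/(2(n-1))`), then
`a_t² ≥ (π/(4λ) + R)² - 2(n-1)t ≥ πR/(2λ)`. -/
theorem a_t_lower_bound (n : ℕ) (hn : 2 ≤ n) (lam R t a : ℝ) (hlam : 0 < lam) (hR : 0 < R)
    (ht : 0 ≤ t) (htT : t ≤ R ^ 2 / (2 * ((n : ℝ) - 1))) (ha : 0 < a)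
    (hrange : Real.sqrt (a ^ 2 + 2 * ((n : ℝ) - 1) * t) ∈
      Set.Ioo R (R + Real.pi / (2 * lam)))
    (heq : Real.tan (lam * (Real.sqrt (a ^ 2 + 2 * ((n : ℝ) - 1) * t) - R)) * a =
      Real.sqrt (a ^ 2 + 2 * ((n : ℝ) - 1) * t)) :
    Real.pi * R / (2 * lam) ≤ (Real.pi / (4 * lam) + R) ^ 2 - 2 * ((n : ℝ) - 1) * t ∧
    (Real.pi / (4 * lam) + R) ^ 2 - 2 * ((n : ℝ) - 1) * t ≤ a ^ 2 := by
  set c := 2 * ((n : ℝ) - 1) * t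
  have hn1 : 0 < (n : ℝ) - 1 := by
    have : (2 : ℝ) ≤ n := by exact_mod_cast hn
    linarith
  have hc : 0 ≤ c := by positivity
  have hcR : c ≤ R ^ 2 := by rwa [le_div_iff₀ (by positivity), mul_comm] at htT
  have has : a ≤ √(a ^ 2 + c) := le_sqrt_of_sq_le (by linarith)
  have hs := add_pi_div_four_le_of_tan_mul_eq hlam ha has hrange heq
  have hsq : (π / (4 * lam) + R) ^ 2 ≤ a ^ 2 + c := by
    rw [← sq_sqrt (by positivity : 0 ≤ a ^ 2 + c)]
    exact pow_le_pow_left₀ (by positivity) (by linarith) 2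
  have hexpand : (π / (4 * lam) + R) ^ 2 = (π / (4 * lam)) ^ 2 + π * R / (2 * lam) + R ^ 2 := by
    field_simp; ring
  constructor
  · linarith [sq_nonneg (π / (4 * lam))]
  · linarith
end

section
/- Let λ, R > 0. Define τ(s) = s²(1 - 1/tan²(λ(s-R))) and σ(s) = (1 - 4λ(R + π/(2λ)))s² + 4λs³ on I = [R + π/(4λ), R + π/(2λ)], with τ extended continuously at the right endpoint by (R+π/(2λ))². Then τ(s) ≥ σ(s) for all s ∈ I. -/
/-!
Put `t = π/2 - λ(s - R) ∈ [0, π/4]`. Since `tan (π/2 - t) = 1 / tan t`, we get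
`τ(s) = s²(1 - tan² t)`, while `σ(s) = s²(1 - 4t)` is an identity in `s`.
So it suffices that `tan² t ≤ 4t`, which follows from `tan t ≤ 2t` (as `sin t ≤ t` and
`cos t ≥ 1/2`) and `t ≤ 1`. At `t = 0` both sides equal `s²`.
-/

open Real Set

theorem Real.tan_le_two_mul {t : ℝ} (ht₀ : 0 ≤ t) (ht : t ≤ π / 3) : tan t ≤ 2 * t := by
  have hcos : 1 / 2 ≤ cos t := by
    rw [← cos_pi_div_three]
    exact cos_le_cos_of_nonneg_of_le_pi ht₀ (by linarith [pi_pos]) ht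
  rw [tan_eq_sin_div_cos, div_le_iff₀ (by linarith)]
  nlinarith [sin_le ht₀]

theorem Real.tan_sq_le_four_mul {t : ℝ} (ht₀ : 0 ≤ t) (ht : t ≤ 1) : tan t ^ 2 ≤ 4 * t := by
  have htan : tan t ≤ 2 * t := tan_le_two_mul ht₀ (by linarith [pi_gt_three])
  have htan₀ : 0 ≤ tan t := tan_nonneg_of_nonneg_of_le_pi_div_two ht₀ (by linarith [pi_gt_three])
  nlinarith

theorem mul_sub_mem_Icc_of_mem_Icc {lam R a b s : ℝ} (hlam : 0 < lam)
    (hs : s ∈ Icc (R + a / lam) (R + b / lam)) : lam * (s - R) ∈ Icc a b := by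
  obtain ⟨h₁, h₂⟩ := hs
  constructor
  · rw [← div_le_iff₀' hlam]; linarith
  · rw [← le_div_iff₀' hlam]; linarith

theorem tau_ge_sigma_general (lam R : ℝ) (hlam : 0 < lam) :
    ∀ s ∈ Set.Icc (R + Real.pi / (4 * lam)) (R + Real.pi / (2 * lam)),
      (1 - 4 * lam * (R + Real.pi / (2 * lam))) * s ^ 2 + 4 * lam * s ^ 3 ≤
        (if s = R + Real.pi / (2 * lam) then (R + Real.pi / (2 * lam)) ^ 2
         else s ^ 2 * (1 - 1 / Real.tan (lam * (s - R)) ^ 2)) := by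
  intro s hs
  have hI : lam * (s - R) ∈ Icc (π / 4) (π / 2) :=
    mul_sub_mem_Icc_of_mem_Icc hlam (by simpa only [div_div] using hs)
  set t := π / 2 - lam * (s - R) with ht
  have hσ : (1 - 4 * lam * (R + π / (2 * lam))) * s ^ 2 + 4 * lam * s ^ 3 =
      s ^ 2 * (1 - 4 * t) := by
    rw [ht]; field_simp; ring
  rw [hσ]
  split_ifs with hend
  · have ht_zero : t = 0 := by rw [ht, hend]; field_simp; ring
    simp [ht_zero, hend]
  · rw [show lam * (s - R) = π / 2 - t by ring, tan_pi_div_two_sub, inv_pow, one_div, inv_inv]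
    gcongr
    exact tan_sq_le_four_mul (by linarith [hI.2]) (by linarith [hI.1, pi_le_four])

/-- With `τ(s) = s²(1 - 1/tan²(λ(s-R)))`, extended continuously by
`τ(R + π/(2λ)) = (R + π/(2λ))²`, and `σ(s) = (1 - 4λ(R + π/(2λ)))s² + 4λs³`,
one has `τ ≥ σ` on `[R + π/(4λ), R + π/(2λ)]`. -/
theorem tau_ge_sigma (lam R : ℝ) (hlam : 0 < lam) (hR : 0 < R) :
    ∀ s ∈ Set.Icc (R + Real.pi / (4 * lam)) (R + Real.pi / (2 * lam)),
      (1 - 4 * lam * (R + Real.pi / (2 * lam))) * s ^ 2 + 4 * lam * s ^ 3 ≤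
        (if s = R + Real.pi / (2 * lam) then (R + Real.pi / (2 * lam)) ^ 2
         else s ^ 2 * (1 - 1 / Real.tan (lam * (s - R)) ^ 2)) :=
  tau_ge_sigma_general lam R hlam
end
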